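/- Let a > 0, b > 0, t > 0, λ₁,…,λ_k > 0, λ = ∑_{j=1}^{k} λ_j, and n ∈ ℕ. Then ∫_0^∞ ( ∑_{x ∈ Ω(k,n)} ∏_{j=1}^{k} ((λ_j y)^{x_j}/x_j!)·e^{-λ_j y} )·(a^{bt}/Γ(bt))·y^{bt-1}·e^{-ay} dy = ((a/(λ+a))^{bt}/Γ(bt))·∑_{x ∈ Ω(k,n)} Γ(∑_{j=1}^{k} x_j + bt)·∏_{j=1}^{k} ((λ_j/(λ+a))^{x_j}/x_j!), where Ω(k,n) = {x ∈ ℕ^k : ∑_j j x_j = n}. -/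

import Mathlib

/-!
Each state probability `p(n, y)` is a finite sum over `Ω(k, n)` of products of Poisson weights,
and such a product is `∏ λⱼ^xⱼ/xⱼ!` times `y^|x| e^{-λy}`. Against the gamma density the integral
of each term is therefore the Gamma integral
`∫₀^∞ y^(|x|+bt-1) e^{-(λ+a)y} dy = Γ(|x|+bt) / (λ+a)^(|x|+bt)`.
-/

open scoped BigOperators
open MeasureTheory

/-- State probabilities of the generalized counting process. -/
noncomputable def gcpPMF (k : ℕ) (lam : Fin k → ℝ) (t : ℝ) (n : ℕ) : ℝ :=
  ∑' x : Fin k → ℕ,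
    if (∑ j, (j.1 + 1) * x j) = n then
      ∏ j, (lam j * t) ^ (x j) / (Nat.factorial (x j) : ℝ) * Real.exp (-(lam j * t))
    else 0

open Real Set Finset

/-- The index set `Ω(k, n)`: `x j` is the multiplicity of the part `j + 1` in a partition of `n`
into parts at most `k`. -/
def partitionMultiplicities (k n : ℕ) : Finset (Fin k → ℕ) :=
  {x ∈ Fintype.piFinset fun _ => range (n + 1) | ∑ j, (j.1 + 1) * x j = n}

theorem mem_partitionMultiplicities {k n : ℕ} {x : Fin k → ℕ} :
    x ∈ partitionMultiplicities k n ↔ ∑ j, (j.1 + 1) * x j = n := by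
  refine mem_filter.trans ⟨And.right, fun hx => ⟨Fintype.mem_piFinset.2 fun j => ?_, hx⟩⟩
  have : (j.1 + 1) * x j ≤ n :=
    hx ▸ single_le_sum (f := fun i : Fin k => (i.1 + 1) * x i) (by simp) (mem_univ j)
  exact mem_range.2 (Nat.lt_succ_of_le (le_trans (Nat.le_mul_of_pos_left _ j.succ_pos) this))

theorem tsum_ite_eq_sum_partitionMultiplicities {M : Type*} [AddCommMonoid M]
    [TopologicalSpace M] (k n : ℕ) (f : (Fin k → ℕ) → M) :
    ∑' x : Fin k → ℕ, (if ∑ j, (j.1 + 1) * x j = n then f x else 0) =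
      ∑ x ∈ partitionMultiplicities k n, f x := by
  rw [tsum_eq_sum (s := partitionMultiplicities k n) fun x hx => if_neg <| by
    rwa [mem_partitionMultiplicities] at hx]
  exact sum_congr rfl fun x hx => if_pos (mem_partitionMultiplicities.1 hx)

theorem gcpPMF_eq_sum (k : ℕ) (lam : Fin k → ℝ) (y : ℝ) (n : ℕ) :
    gcpPMF k lam y n = ∑ x ∈ partitionMultiplicities k n,
      ∏ j, (lam j * y) ^ x j / (x j).factorial * exp (-(lam j * y)) :=
  tsum_ite_eq_sum_partitionMultiplicities k n _

section PoissonGamma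

variable {ι : Type*} [Fintype ι] (lam : ι → ℝ) (x : ι → ℕ)

theorem prod_poisson_eq (y : ℝ) :
    ∏ j, (lam j * y) ^ x j / (x j).factorial * exp (-(lam j * y)) =
      (∏ j, lam j ^ x j / (x j).factorial) * y ^ (∑ j, x j) * exp (-((∑ j, lam j) * y)) := by
  rw [sum_mul, ← sum_neg_distrib, exp_sum, ← prod_pow_eq_pow_sum, ← prod_mul_distrib,
    ← prod_mul_distrib]
  refine prod_congr rfl fun j _ => ?_
  rw [mul_pow]
  ring

theorem prod_poisson_mul_gammaKernel_eqOn (s a : ℝ) :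
    EqOn (fun y => (∏ j, (lam j * y) ^ x j / (x j).factorial * exp (-(lam j * y))) *
        y ^ (s - 1) * exp (-(a * y)))
      (fun y => (∏ j, lam j ^ x j / (x j).factorial) *
        (y ^ ((∑ j, (x j : ℝ)) + s - 1) * exp (-(((∑ j, lam j) + a) * y)))) (Ioi 0) := by
  intro y (hy : 0 < y)
  have hpow : y ^ (∑ j, x j) * y ^ (s - 1) = y ^ ((∑ j, (x j : ℝ)) + s - 1) := by
    rw [← rpow_natCast, ← rpow_add hy]
    push_cast
    ring_nf
  have hexp : exp (-((∑ j, lam j) * y)) * exp (-(a * y)) = exp (-(((∑ j, lam j) + a) * y)) := by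
    rw [← exp_add]
    ring_nf
  simp only [prod_poisson_eq, ← hpow, ← hexp]
  ring

variable {lam} {s a : ℝ}

theorem integrableOn_prod_poisson_mul_gammaKernel (hs : 0 < s) (hc : 0 < (∑ j, lam j) + a) :
    IntegrableOn (fun y => (∏ j, (lam j * y) ^ x j / (x j).factorial * exp (-(lam j * y))) *
      y ^ (s - 1) * exp (-(a * y))) (Ioi 0) := by
  have hm : 0 < (∑ j, (x j : ℝ)) + s := by positivity
  have hkernel := integrableOn_rpow_mul_exp_neg_mul_rpow (p := 1)
    (s := (∑ j, (x j : ℝ)) + s - 1) (by linarith) one_pos hc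
  simp only [rpow_one, neg_mul] at hkernel
  exact IntegrableOn.congr_fun (hkernel.const_mul _)
    (prod_poisson_mul_gammaKernel_eqOn lam x s a).symm measurableSet_Ioi

theorem integral_prod_poisson_mul_gammaKernel (hs : 0 < s) (hc : 0 < (∑ j, lam j) + a) :
    ∫ y in Ioi 0, (∏ j, (lam j * y) ^ x j / (x j).factorial * exp (-(lam j * y))) *
        y ^ (s - 1) * exp (-(a * y)) =
      Gamma ((∑ j, (x j : ℝ)) + s) *
        (∏ j, (lam j / ((∑ i, lam i) + a)) ^ x j / (x j).factorial) /
          ((∑ j, lam j) + a) ^ s := by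
  have hm : 0 < (∑ j, (x j : ℝ)) + s := by positivity
  rw [setIntegral_congr_fun measurableSet_Ioi (prod_poisson_mul_gammaKernel_eqOn lam x s a),
    integral_const_mul, integral_rpow_mul_exp_neg_mul_Ioi hm hc, ← Nat.cast_sum,
    rpow_add (by positivity), rpow_natCast, one_div, inv_rpow hc.le, inv_pow,
    ← prod_pow_eq_pow_sum]
  simp only [div_pow]
  rw [prod_div_distrib, prod_div_distrib, prod_div_distrib]
  field_simp

end PoissonGamma

/-- Pmf of the GCP time-changed by an independent gamma subordinator:
`∫_0^∞ p(n,y)·(a^{bt}/Γ(bt))·y^{bt-1}·e^{-ay} dy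
 = ((a/(λ+a))^{bt}/Γ(bt))·∑_{x∈Ω(k,n)} Γ(∑_j x_j + bt)·∏_j (λ_j/(λ+a))^{x_j}/x_j!`. -/
theorem gcp_gamma_subordinator_pmf (a b t : ℝ) (ha : 0 < a) (hb : 0 < b) (ht : 0 < t)
    (k : ℕ) (lam : Fin k → ℝ) (hlam : ∀ j, 0 < lam j) (n : ℕ) :
    (∫ y in Set.Ioi (0 : ℝ),
        gcpPMF k lam y n * (a ^ (b * t) / Real.Gamma (b * t)) * y ^ (b * t - 1) *
          Real.exp (-(a * y))) =
      (a / ((∑ j, lam j) + a)) ^ (b * t) / Real.Gamma (b * t) *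
        ∑' x : Fin k → ℕ,
          (if (∑ j, (j.1 + 1) * x j) = n then
            Real.Gamma ((∑ j, (x j : ℝ)) + b * t) *
              ∏ j, (lam j / ((∑ i, lam i) + a)) ^ (x j) / (Nat.factorial (x j) : ℝ)
          else 0) := by
  have hs : 0 < b * t := mul_pos hb ht
  have hc : 0 < (∑ j, lam j) + a :=
    add_pos_of_nonneg_of_pos (sum_nonneg fun j _ => (hlam j).le) ha
  calc _ = ∫ y in Ioi 0, ∑ x ∈ partitionMultiplicities k n, a ^ (b * t) / Gamma (b * t) *
        ((∏ j, (lam j * y) ^ x j / (x j).factorial * exp (-(lam j * y))) *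
          y ^ (b * t - 1) * exp (-(a * y))) := by
        refine setIntegral_congr_fun measurableSet_Ioi fun y _ => ?_
        simp only [gcpPMF_eq_sum, sum_mul]
        exact sum_congr rfl fun x _ => by ring
    _ = ∑ x ∈ partitionMultiplicities k n, a ^ (b * t) / Gamma (b * t) *
        (Gamma ((∑ j, (x j : ℝ)) + b * t) *
          (∏ j, (lam j / ((∑ i, lam i) + a)) ^ x j / (x j).factorial) /
            ((∑ j, lam j) + a) ^ (b * t)) := by
        rw [integral_finsetSum _ fun x _ =>
          (integrableOn_prod_poisson_mul_gammaKernel x hs hc).const_mul _]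
        simp only [integral_const_mul, integral_prod_poisson_mul_gammaKernel _ hs hc]
    _ = _ := by
        rw [tsum_ite_eq_sum_partitionMultiplicities, mul_sum, div_rpow ha.le hc.le]
        exact sum_congr rfl fun x _ => by ring
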